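/- For every real t ≠ 0, the spinor φ̃₁(z) = (t·conj(z)/(t² + |z|²))·exp(−i z²/(8t)), φ̃₂(z) = (t²/(t² + |z|²))·exp(i conj(z)²/(8t)) solves the conjugate Dirac equation with the Ozawa potential Ũ(z,t) = (1/t)·exp(−i(z² + conj(z)²)/(8t))·1/(1 + |z|²/t²); that is, for all z ∈ ℂ, ∂φ̃₂(z) + conj(Ũ(z,t))·φ̃₁(z) = 0 and −∂̄φ̃₁(z) + Ũ(z,t)·φ̃₂(z) = 0. -/

import Mathlib

/-!
Every real-linear map `ℂ → ℂ` is `v ↦ a v + b v̄`, and when it is the derivative `Df(z)`, then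
`∂f(z) = a` and `∂̄f(z) = b`; the pairs `(a, b)` obey the usual sum, product, quotient and
holomorphic chain rules. Writing `E₁ = exp(-i z²/(8t))` (holomorphic) and `E₂ = exp(i z̄²/(8t))`
(antiholomorphic), this gives `∂φ̃₂ = -t² z̄ E₂ / (t² + |z|²)²` and `∂̄φ̃₁ = t³ E₁ / (t² + |z|²)²`,
while the potential factors as `Ũ = t E₁ / ((t² + |z|²) E₂)` and `conj Ũ = t E₂ / ((t² + |z|²) E₁)`.
Both equations are then identities of rational expressions in `t`, `z̄`, `|z|²`, `E₁`, `E₂`.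
-/

open Complex ComplexConjugate

noncomputable def wirtingerD (f : ℂ → ℂ) (z : ℂ) : ℂ :=
  (1 / 2) * (fderiv ℝ f z 1 - Complex.I * fderiv ℝ f z Complex.I)

noncomputable def wirtingerDBar (f : ℂ → ℂ) (z : ℂ) : ℂ :=
  (1 / 2) * (fderiv ℝ f z 1 + Complex.I * fderiv ℝ f z Complex.I)

noncomputable def ozawaU (z : ℂ) (t : ℝ) : ℂ :=
  (1 / (t : ℂ)) *
    Complex.exp (-Complex.I * (z ^ 2 + ((starRingEnd ℂ) z) ^ 2) / (8 * (t : ℂ))) *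
    (1 / (1 + (‖z‖ : ℂ) ^ 2 / (t : ℂ) ^ 2))

def HasWirtingerDerivAt (f : ℂ → ℂ) (a b z : ℂ) : Prop :=
  HasFDerivAt f (a • ContinuousLinearMap.id ℝ ℂ + b • conjCLE.toContinuousLinearMap) z

namespace HasWirtingerDerivAt

variable {f g : ℂ → ℂ} {a b c d z : ℂ}

theorem fderiv_apply (h : HasWirtingerDerivAt f a b z) (v : ℂ) :
    fderiv ℝ f z v = a * v + b * conj v := by
  simp [h.fderiv]

theorem wirtingerD_eq (h : HasWirtingerDerivAt f a b z) : wirtingerD f z = a := by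
  rw [wirtingerD, h.fderiv_apply, h.fderiv_apply, conj_I, map_one]
  linear_combination (b - a) / 2 * I_mul_I

theorem wirtingerDBar_eq (h : HasWirtingerDerivAt f a b z) : wirtingerDBar f z = b := by
  rw [wirtingerDBar, h.fderiv_apply, h.fderiv_apply, conj_I, map_one]
  linear_combination (a - b) / 2 * I_mul_I

theorem add (hf : HasWirtingerDerivAt f a b z) (hg : HasWirtingerDerivAt g c d z) :
    HasWirtingerDerivAt (fun w => f w + g w) (a + c) (b + d) z := by
  refine (HasFDerivAt.add hf hg).congr_fderiv ?_
  ext1 v; simp; ring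

theorem mul (hf : HasWirtingerDerivAt f a b z) (hg : HasWirtingerDerivAt g c d z) :
    HasWirtingerDerivAt (fun w => f w * g w) (a * g z + f z * c) (b * g z + f z * d) z := by
  refine (HasFDerivAt.mul hf hg).congr_fderiv ?_
  ext1 v; simp; ring

end HasWirtingerDerivAt

theorem HasDerivAt.comp_hasWirtingerDerivAt {h f : ℂ → ℂ} {h' a b z : ℂ}
    (hh : HasDerivAt h h' (f z)) (hf : HasWirtingerDerivAt f a b z) :
    HasWirtingerDerivAt (fun w => h (f w)) (h' * a) (h' * b) z := by
  refine (hh.comp_hasFDerivAt z hf).congr_fderiv ?_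
  ext1 v; simp; ring

theorem hasWirtingerDerivAt_const (c z : ℂ) : HasWirtingerDerivAt (fun _ => c) 0 0 z := by
  refine (hasFDerivAt_const (𝕜 := ℝ) c z).congr_fderiv ?_
  ext1 v; simp

theorem hasWirtingerDerivAt_id (z : ℂ) : HasWirtingerDerivAt (fun w => w) 1 0 z := by
  refine (hasFDerivAt_id z).congr_fderiv ?_
  simp

theorem hasWirtingerDerivAt_conj (z : ℂ) : HasWirtingerDerivAt (fun w => conj w) 0 1 z := by
  refine conjCLE.toContinuousLinearMap.hasFDerivAt.congr_fderiv ?_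
  simp

theorem HasDerivAt.hasWirtingerDerivAt {h : ℂ → ℂ} {h' z : ℂ} (hh : HasDerivAt h h' z) :
    HasWirtingerDerivAt h h' 0 z := by
  simpa using hh.comp_hasWirtingerDerivAt (hasWirtingerDerivAt_id z)

theorem HasDerivAt.hasWirtingerDerivAt_comp_conj {h : ℂ → ℂ} {h' z : ℂ}
    (hh : HasDerivAt h h' (conj z)) : HasWirtingerDerivAt (fun w => h (conj w)) 0 h' z := by
  simpa using hh.comp_hasWirtingerDerivAt (hasWirtingerDerivAt_conj z)

theorem HasWirtingerDerivAt.inv {f : ℂ → ℂ} {a b z : ℂ}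
    (hf : HasWirtingerDerivAt f a b z) (hz : f z ≠ 0) :
    HasWirtingerDerivAt (fun w => (f w)⁻¹) (-(f z ^ 2)⁻¹ * a) (-(f z ^ 2)⁻¹ * b) z :=
  (hasDerivAt_inv hz).comp_hasWirtingerDerivAt hf

theorem HasWirtingerDerivAt.div {f g : ℂ → ℂ} {a b c d z : ℂ}
    (hf : HasWirtingerDerivAt f a b z) (hg : HasWirtingerDerivAt g c d z) (hz : g z ≠ 0) :
    HasWirtingerDerivAt (fun w => f w / g w)
      ((a * g z - f z * c) / g z ^ 2) ((b * g z - f z * d) / g z ^ 2) z := by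
  convert hf.mul (hg.inv hz) using 1 <;> field_simp <;> ring

theorem hasWirtingerDerivAt_norm_sq (z : ℂ) :
    HasWirtingerDerivAt (fun w => (‖w‖ : ℂ) ^ 2) (conj z) z z := by
  simpa [mul_conj'] using (hasWirtingerDerivAt_id z).mul (hasWirtingerDerivAt_conj z)

section Ozawa

variable {t : ℝ}

noncomputable def ozawaSpinor₁ (t : ℝ) (z : ℂ) : ℂ :=
  ((t : ℂ) * conj z / ((t : ℂ) ^ 2 + (‖z‖ : ℂ) ^ 2)) * exp (-I * z ^ 2 / (8 * (t : ℂ)))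

noncomputable def ozawaSpinor₂ (t : ℝ) (z : ℂ) : ℂ :=
  ((t : ℂ) ^ 2 / ((t : ℂ) ^ 2 + (‖z‖ : ℂ) ^ 2)) * exp (I * conj z ^ 2 / (8 * (t : ℂ)))

theorem sq_add_norm_sq_ne_zero (ht : t ≠ 0) (z : ℂ) : (t : ℂ) ^ 2 + (‖z‖ : ℂ) ^ 2 ≠ 0 := by
  exact_mod_cast (by positivity : t ^ 2 + ‖z‖ ^ 2 ≠ 0)

theorem ozawaU_eq (ht : t ≠ 0) (z : ℂ) :
    ozawaU z t = t / ((t : ℂ) ^ 2 + (‖z‖ : ℂ) ^ 2) *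
      exp (-I * z ^ 2 / (8 * (t : ℂ))) / exp (I * conj z ^ 2 / (8 * (t : ℂ))) := by
  have htC : (t : ℂ) ≠ 0 := by exact_mod_cast ht
  have hexp : exp (-I * (z ^ 2 + conj z ^ 2) / (8 * (t : ℂ))) * exp (I * conj z ^ 2 / (8 * (t : ℂ)))
      = exp (-I * z ^ 2 / (8 * (t : ℂ))) := by
    rw [← exp_add]; ring_nf
  rw [ozawaU, eq_div_iff (exp_ne_zero _), ← hexp]
  field_simp

theorem conj_ozawaU (ht : t ≠ 0) (z : ℂ) :
    conj (ozawaU z t) = t / ((t : ℂ) ^ 2 + (‖z‖ : ℂ) ^ 2) *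
      exp (I * conj z ^ 2 / (8 * (t : ℂ))) / exp (-I * z ^ 2 / (8 * (t : ℂ))) := by
  rw [ozawaU_eq ht]
  simp [← exp_conj, map_ofNat]

theorem hasWirtingerDerivAt_sq_add_norm_sq (t : ℝ) (z : ℂ) :
    HasWirtingerDerivAt (fun w => (t : ℂ) ^ 2 + (‖w‖ : ℂ) ^ 2) (conj z) z z := by
  simpa using (hasWirtingerDerivAt_const _ z).add (hasWirtingerDerivAt_norm_sq z)

theorem wirtingerD_ozawaSpinor₂ (ht : t ≠ 0) (z : ℂ) :
    wirtingerD (ozawaSpinor₂ t) z = -(t ^ 2 * conj z) / ((t : ℂ) ^ 2 + (‖z‖ : ℂ) ^ 2) ^ 2 *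
      exp (I * conj z ^ 2 / (8 * (t : ℂ))) := by
  have hexp : HasDerivAt (fun x => exp (I * x ^ 2 / (8 * (t : ℂ)))) _ (conj z) :=
    (((hasDerivAt_pow 2 _).const_mul I).div_const _).cexp
  have h : HasWirtingerDerivAt (ozawaSpinor₂ t) _ _ z :=
    ((hasWirtingerDerivAt_const _ z).div (hasWirtingerDerivAt_sq_add_norm_sq t z)
      (sq_add_norm_sq_ne_zero ht z)).mul hexp.hasWirtingerDerivAt_comp_conj
  rw [h.wirtingerD_eq]
  ring

theorem wirtingerDBar_ozawaSpinor₁ (ht : t ≠ 0) (z : ℂ) :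
    wirtingerDBar (ozawaSpinor₁ t) z = t ^ 3 / ((t : ℂ) ^ 2 + (‖z‖ : ℂ) ^ 2) ^ 2 *
      exp (-I * z ^ 2 / (8 * (t : ℂ))) := by
  have hexp : HasDerivAt (fun x => exp (-I * x ^ 2 / (8 * (t : ℂ)))) _ z :=
    (((hasDerivAt_pow 2 _).const_mul (-I)).div_const _).cexp
  have h : HasWirtingerDerivAt (ozawaSpinor₁ t) _ _ z :=
    (((hasWirtingerDerivAt_const _ z).mul (hasWirtingerDerivAt_conj z)).div
      (hasWirtingerDerivAt_sq_add_norm_sq t z) (sq_add_norm_sq_ne_zero ht z)).mul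
      hexp.hasWirtingerDerivAt
  rw [h.wirtingerDBar_eq, ← mul_conj']
  field_simp [sq_add_norm_sq_ne_zero ht z]
  ring

end Ozawa

theorem stmt_9 (t : ℝ) (ht : t ≠ 0)
    (φt₁ φt₂ : ℂ → ℂ)
    (hφt₁ : ∀ z, φt₁ z =
      ((t : ℂ) * (starRingEnd ℂ) z / ((t : ℂ) ^ 2 + (‖z‖ : ℂ) ^ 2)) *
        Complex.exp (-Complex.I * z ^ 2 / (8 * (t : ℂ))))
    (hφt₂ : ∀ z, φt₂ z =
      ((t : ℂ) ^ 2 / ((t : ℂ) ^ 2 + (‖z‖ : ℂ) ^ 2)) *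
        Complex.exp (Complex.I * ((starRingEnd ℂ) z) ^ 2 / (8 * (t : ℂ)))) :
    ∀ z : ℂ,
      wirtingerD φt₂ z + (starRingEnd ℂ) (ozawaU z t) * φt₁ z = 0 ∧
      -wirtingerDBar φt₁ z + ozawaU z t * φt₂ z = 0 := by
  obtain rfl : φt₁ = ozawaSpinor₁ t := funext hφt₁
  obtain rfl : φt₂ = ozawaSpinor₂ t := funext hφt₂
  intro z
  rw [wirtingerD_ozawaSpinor₂ ht, wirtingerDBar_ozawaSpinor₁ ht, conj_ozawaU ht, ozawaU_eq ht,
    ozawaSpinor₁, ozawaSpinor₂]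
  constructor <;> field_simp [sq_add_norm_sq_ne_zero ht z] <;> ring
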